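/- (Theorem 7.1: the second-order Hessian quadratic form is rank one and is determined by Z_N'(gₙ).) Let n ∈ ℕ, let g > 2π be a real number with θ(g) = π·n, let N ∈ ℕ and a = (a₁,…,a_N) ∈ ℝ^N. Then Σ_{k₁=1}^N Σ_{k₂=1}^N ((−1)^n/(log(g/(2π)))²) · [sin(log(k₁+1)·g)·log(g/(2π(k₁+1)²))/√(k₁+1)] · [sin(log(k₂+1)·g)·log(g/(2π(k₂+1)²))/√(k₂+1)] · a_{k₁} · a_{k₂} = 4·(−1)^n · ( Z_N'(g; a) / log(g/(2π)) )², where Z_N'(g; a) denotes the derivative at t = g of the map t ↦ Z_N(t; a), and where the double-sum entries are the mixed second partials ∂²Δₙ/∂a_{k₁}∂a_{k₂}(0) of the Gram discriminant computed in Proposition 7.2. -/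

import Mathlib

/-- The Riemann–Siegel theta function (approximate form):
`θ(t) = (t/2)·log(t/(2π)) − t/2 − π/8`. -/
noncomputable def rsTheta (t : ℝ) : ℝ :=
  t / 2 * Real.log (t / (2 * Real.pi)) - t / 2 - Real.pi / 8

/-- The `N`-th section
`Z_N(t; a) = cos(θ(t)) + Σ_{k=1}^N (aₖ/√(k+1))·cos(θ(t) − log(k+1)·t)`,
with `a : Fin N → ℝ` and the coordinate `k : Fin N` playing the role of the
paper's index `k+1 = k.val + 2`. -/
noncomputable def sectionZ (N : ℕ) (t : ℝ) (a : Fin N → ℝ) : ℝ :=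
  Real.cos (rsTheta t) +
    ∑ k : Fin N, a k / Real.sqrt ((k : ℕ) + 2) *
      Real.cos (rsTheta t - Real.log ((k : ℕ) + 2) * t)

open Real Finset

/-!
At a Gram point `θ(g) = πn` each term `cos(θ(t) − t log m)` of `Z_N` has derivative
`(−1)ⁿ/2 · sin(g log m) · log(g/(2π m²))`, while `cos θ` has derivative `0`. Hence
`Z_N'(g; a) = (−1)ⁿ/2 · Σₖ wₖ aₖ` for the weights `wₖ` appearing in the Hessian, and the
Hessian quadratic form `(−1)ⁿ/log(g/2π)² · Σ wₖ₁ wₖ₂ aₖ₁ aₖ₂` is the square of that linear form.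
-/

noncomputable def gramWeight (g : ℝ) (k : ℕ) : ℝ :=
  sin (log ((k : ℝ) + 2) * g) * log (g / (2 * π * ((k : ℝ) + 2) ^ 2)) / √((k : ℝ) + 2)

lemma hasDerivAt_rsTheta {t : ℝ} (ht : 0 < t) :
    HasDerivAt rsTheta (log (t / (2 * π)) / 2) t := by
  have hlog : HasDerivAt (fun s => log (s / (2 * π))) (1 / t) t := by
    refine (((hasDerivAt_id' t).div_const (2 * π)).log (by positivity)).congr_deriv ?_
    field_simp
  refine ((((hasDerivAt_id' t).div_const 2).mul hlog).sub
    ((hasDerivAt_id' t).div_const 2)).sub_const (π / 8) |>.congr_deriv ?_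
  field_simp
  ring

lemma log_div_two_pi_mul_sq {g m : ℝ} (hg : 0 < g) (hm : 0 < m) :
    log (g / (2 * π * m ^ 2)) = log (g / (2 * π)) - 2 * log m := by
  rw [log_div hg.ne' (by positivity), log_div hg.ne' (by positivity),
    log_mul (by positivity) (by positivity), log_pow]
  push_cast
  ring

lemma hasDerivAt_cos_rsTheta_sub_mul_of_gram {n : ℕ} {g : ℝ} (hg : 0 < g)
    (hGram : rsTheta g = π * n) (c : ℝ) :
    HasDerivAt (fun t => cos (rsTheta t - c * t))
      ((-1) ^ n / 2 * (sin (c * g) * (log (g / (2 * π)) - 2 * c))) g := by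
  have hphase : HasDerivAt (fun t => rsTheta t - c * t) (log (g / (2 * π)) / 2 - c) g := by
    simpa using (hasDerivAt_rsTheta hg).fun_sub ((hasDerivAt_id' g).const_mul c)
  have hsin : sin (rsTheta g - c * g) = -((-1) ^ n * sin (c * g)) := by
    rw [hGram, mul_comm π]
    exact sin_nat_mul_pi_sub _ n
  refine hphase.cos.congr_deriv ?_
  rw [hsin]
  ring

lemma hasDerivAt_sectionZ_of_gram {n : ℕ} {g : ℝ} (hg : 0 < g)
    (hGram : rsTheta g = π * n) (N : ℕ) (a : Fin N → ℝ) :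
    HasDerivAt (fun t => sectionZ N t a)
      ((-1) ^ n / 2 * ∑ k : Fin N, gramWeight g k * a k) g := by
  have hmain : HasDerivAt (fun t => cos (rsTheta t)) 0 g := by
    simpa using hasDerivAt_cos_rsTheta_sub_mul_of_gram hg hGram 0
  have hterm (k : Fin N) : HasDerivAt
      (fun t => a k / √((k : ℕ) + 2) * cos (rsTheta t - log ((k : ℕ) + 2) * t))
      ((-1) ^ n / 2 * (gramWeight g k * a k)) g := by
    have hk : (0 : ℝ) < (k : ℕ) + 2 := by positivity
    refine ((hasDerivAt_cos_rsTheta_sub_mul_of_gram hg hGram _).const_mul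
      (a k / √((k : ℕ) + 2))).congr_deriv ?_
    rw [gramWeight, log_div_two_pi_mul_sq hg hk]
    ring
  simpa [sectionZ, mul_sum] using
    hmain.fun_add (HasDerivAt.fun_sum (u := univ) fun k _ => hterm k)

lemma sum_sum_mul_mul_mul_mul_eq_mul_sq {ι R : Type*} [Fintype ι] [CommSemiring R]
    (c : R) (w a : ι → R) :
    ∑ i, ∑ j, c * w i * w j * a i * a j = c * (∑ i, w i * a i) ^ 2 := by
  rw [sq, sum_mul_sum]
  simp only [mul_sum]
  exact sum_congr rfl fun i _ => sum_congr rfl fun j _ => by ring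

/-- Theorem 7.1: the second-order Hessian quadratic form of the Gram discriminant
(whose entries are the mixed second partials computed in Proposition 7.2) is rank
one and equals `4·(−1)^n·(Z_N'(g; a)/log(g/(2π)))²`, where `Z_N'(g; a)` is the
derivative at `t = g` of `t ↦ Z_N(t; a)`. -/
theorem hessian_quadratic_form_rank_one (n : ℕ) (g : ℝ)
    (hg : 2 * Real.pi < g) (hGram : rsTheta g = Real.pi * n)
    (N : ℕ) (a : Fin N → ℝ) :
    ∑ k₁ : Fin N, ∑ k₂ : Fin N,
      ((-1 : ℝ) ^ n / (Real.log (g / (2 * Real.pi))) ^ 2) *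
        (Real.sin (Real.log ((k₁ : ℕ) + 2) * g) *
          Real.log (g / (2 * Real.pi * ((k₁ : ℕ) + 2) ^ 2)) /
            Real.sqrt ((k₁ : ℕ) + 2)) *
        (Real.sin (Real.log ((k₂ : ℕ) + 2) * g) *
          Real.log (g / (2 * Real.pi * ((k₂ : ℕ) + 2) ^ 2)) /
            Real.sqrt ((k₂ : ℕ) + 2)) * a k₁ * a k₂ =
      4 * (-1 : ℝ) ^ n *
        (deriv (fun t => sectionZ N t a) g / Real.log (g / (2 * Real.pi))) ^ 2 := by
  have hg0 : 0 < g := lt_trans (by positivity) hg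
  rw [(hasDerivAt_sectionZ_of_gram hg0 hGram N a).deriv]
  have hform := sum_sum_mul_mul_mul_mul_eq_mul_sq ((-1 : ℝ) ^ n / log (g / (2 * π)) ^ 2)
    (fun k : Fin N => gramWeight g k) a
  simp only [gramWeight] at hform ⊢
  have hsign : ((-1 : ℝ) ^ n) ^ 2 = 1 := by rw [← pow_mul, mul_comm, pow_mul, neg_one_sq, one_pow]
  rw [hform, div_pow, mul_pow, div_pow, hsign]
  ring
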